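/- arXiv:1601.06899 — 5 statements merged into one kernel-verified Lean document; each statement's English description precedes it below -/
import Mathlib

section
/- If the code C has 𝔽_p-dimension m₁, then the quotient of the additive group (τ/p)·ℤ^m by its subgroup Λ₁ has exactly p^{m−m₁} elements (equivalently, the index of Λ₁ in p^{−1}Λ is p^{m−m₁}). -/
/-- The Construction-A lattice `Λ₁ = { (τ/p)·v(c) + τ·z : c ∈ C, z ∈ ℤ^m }`,
where `v` maps each element of `ZMod p` to its canonical representative in `ℝ`. -/
def ConstructionA (p m : ℕ) (τ : ℝ) (C : Submodule (ZMod p) (Fin m → ZMod p)) :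
    Set (Fin m → ℝ) :=
  {r | ∃ c ∈ C, ∃ z : Fin m → ℤ,
    r = fun i => (τ / p) * ((c i).val : ℝ) + τ * (z i : ℝ)}

/-!
Scaling by `τ/p` identifies `ℤ^m` with `(τ/p)·ℤ^m`, and since
`(τ/p)·v(c) + τ·z = (τ/p)·(v(c) + p·z)`, it carries the preimage of `C` under reduction
mod `p` onto `Λ₁`. Reduction mod `p` is surjective, so the index of `Λ₁` in `(τ/p)·ℤ^m` is the
index of `C` in `𝔽_p^m`, that is `|𝔽_p^m ⧸ C| = p^(m - m₁)`.
-/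

open Module

theorem Submodule.toAddSubgroup_index_eq_card_pow {K V : Type*} [DivisionRing K]
    [AddCommGroup V] [Module K V] [Module.Finite K V] (W : Submodule K V) :
    W.toAddSubgroup.index = Nat.card K ^ (finrank K V - finrank K W) := by
  rw [← Submodule.finrank_quotient]
  exact Module.natCard_eq_pow_finrank (V := V ⧸ W)

section IntVec

variable {ι : Type*}

noncomputable def intVecScale (ι : Type*) (s : ℝ) : (ι → ℤ) →+ (ι → ℝ) :=
  s • (Int.castAddHom ℝ).compLeft ι

@[simp]
theorem intVecScale_apply (s : ℝ) (z : ι → ℤ) (i : ι) : intVecScale ι s z i = s * z i := rfl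

theorem intVecScale_injective {s : ℝ} (hs : s ≠ 0) : Function.Injective (intVecScale ι s) :=
  fun _ _ h => funext fun i => by simpa [hs] using congrFun h i

theorem coe_range_intVecScale (s : ℝ) :
    ((intVecScale ι s).range : Set (ι → ℝ)) = {r | ∀ i, ∃ z : ℤ, r i = s * z} := by
  ext r
  simp only [AddMonoidHom.coe_range, Set.mem_range, funext_iff, intVecScale_apply]
  exact ⟨fun ⟨z, hz⟩ i => ⟨z i, (hz i).symm⟩,
    fun h => ⟨fun i => (h i).choose, fun i => (h i).choose_spec.symm⟩⟩

def intVecReduce (ι : Type*) (p : ℕ) : (ι → ℤ) →+ (ι → ZMod p) :=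
  (Int.castAddHom (ZMod p)).compLeft ι

@[simp]
theorem intVecReduce_apply (p : ℕ) (z : ι → ℤ) (i : ι) : intVecReduce ι p z i = z i := rfl

theorem intVecReduce_surjective (p : ℕ) : Function.Surjective (intVecReduce ι p) :=
  (ZMod.intCast_surjective (n := p)).comp_left

end IntVec

theorem constructionA_eq_map_comap {p m : ℕ} [NeZero p] (τ : ℝ)
    (C : Submodule (ZMod p) (Fin m → ZMod p)) :
    ConstructionA p m τ C =
      ((C.toAddSubgroup.comap (intVecReduce (Fin m) p)).map (intVecScale (Fin m) (τ / p)) :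
        Set (Fin m → ℝ)) := by
  have hp : (p : ℝ) ≠ 0 := NeZero.ne _
  ext r
  simp only [ConstructionA, AddSubgroup.coe_map, AddSubgroup.coe_comap, Set.mem_image,
    Set.mem_preimage, Submodule.coe_toAddSubgroup, SetLike.mem_coe]
  constructor
  · rintro ⟨c, hc, z, rfl⟩
    refine ⟨fun i => (c i).val + p * z i, ?_, ?_⟩
    · convert hc
      funext i
      simp
    · funext i
      simp only [intVecScale_apply]
      push_cast
      field_simp
  · rintro ⟨z, hz, rfl⟩
    refine ⟨_, hz, fun i => z i / p, ?_⟩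
    funext i
    have hval : (((z i : ZMod p).val : ℤ) : ℝ) = (z i % p : ℤ) :=
      congrArg _ (ZMod.val_intCast _)
    have hdecomp : (z i : ℝ) = (z i % p : ℤ) + p * (z i / p : ℤ) := by
      exact_mod_cast (Int.emod_add_mul_ediv (z i) p).symm
    push_cast at hval
    rw [intVecScale_apply, intVecReduce_apply, hval, hdecomp]
    field_simp

theorem constructionA_quotient_card_general (p m m₁ : ℕ) (hp : p.Prime) (τ : ℝ) (hτ : 0 < τ)
    (C : Submodule (ZMod p) (Fin m → ZMod p))
    (hdim : Module.finrank (ZMod p) C = m₁)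
    (L Λ₁ : AddSubgroup (Fin m → ℝ))
    (hL : (L : Set (Fin m → ℝ)) =
      {r : Fin m → ℝ | ∀ i, ∃ z : ℤ, r i = (τ / p) * (z : ℝ)})
    (hΛ₁ : (Λ₁ : Set (Fin m → ℝ)) = ConstructionA p m τ C) :
    Nat.card (↥L ⧸ Λ₁.addSubgroupOf L) = p ^ (m - m₁) := by
  have : Fact p.Prime := ⟨hp⟩
  set f := intVecScale (Fin m) (τ / p)
  set H := C.toAddSubgroup.comap (intVecReduce (Fin m) p)
  have hf : Function.Injective f :=
    intVecScale_injective (div_ne_zero hτ.ne' (Nat.cast_ne_zero.2 hp.ne_zero))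
  have hL_eq : L = (⊤ : AddSubgroup (Fin m → ℤ)).map f :=
    SetLike.coe_injective <| by rw [hL, ← f.range_eq_map, coe_range_intVecScale]
  have hΛ₁_eq : Λ₁ = H.map f :=
    SetLike.coe_injective <| hΛ₁.trans (constructionA_eq_map_comap τ C)
  calc Nat.card (↥L ⧸ Λ₁.addSubgroupOf L)
      = (H.map f).relIndex ((⊤ : AddSubgroup (Fin m → ℤ)).map f) := by
        rw [hL_eq, hΛ₁_eq]; rfl
    _ = C.toAddSubgroup.index := by
        rw [AddSubgroup.relIndex_map_map_of_injective _ _ hf, AddSubgroup.relIndex_top_right,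
          AddSubgroup.index_comap_of_surjective _ (intVecReduce_surjective p)]
    _ = p ^ (m - m₁) := by
        rw [Submodule.toAddSubgroup_index_eq_card_pow, Nat.card_zmod, finrank_fin_fun, hdim]

/-- If `C` has `𝔽_p`-dimension `m₁`, then the quotient of the
additive group `(τ/p)·ℤ^m` by its subgroup `Λ₁` has exactly `p^{m−m₁}`
elements, i.e. the index of `Λ₁` in `p⁻¹Λ` is `p^{m−m₁}`. -/
theorem constructionA_quotient_card (p m m₁ : ℕ) (hp : p.Prime) (hm : 0 < m)
    (hm₁ : m₁ ≤ m) (τ : ℝ) (hτ : 0 < τ)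
    (C : Submodule (ZMod p) (Fin m → ZMod p))
    (hdim : Module.finrank (ZMod p) C = m₁)
    (L Λ₁ : AddSubgroup (Fin m → ℝ))
    (hL : (L : Set (Fin m → ℝ)) =
      {r : Fin m → ℝ | ∀ i, ∃ z : ℤ, r i = (τ / p) * (z : ℝ)})
    (hΛ₁ : (Λ₁ : Set (Fin m → ℝ)) = ConstructionA p m τ C) :
    Nat.card (↥L ⧸ Λ₁.addSubgroupOf L) = p ^ (m - m₁) :=
  constructionA_quotient_card_general p m m₁ hp τ hτ C hdim L Λ₁ hL hΛ₁
end

section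
/- The quantized noisy measurement equals a finite-field codeword combination plus discrete noise: for each coordinate i, the image in ZMod p of the integer round( (p/τ)·( Σ_{ℓ=1}^{n} t_{ℓ,i}·x_ℓ + ν_i ) ) equals Σ_{ℓ=1}^{n} (x_ℓ : ZMod p)·c_{ℓ,i} + (round((p/τ)·ν_i) : ZMod p). -/
/-! Scaling by `p/τ` turns each `t_{ℓ,i}` into the integer `v(c_{ℓ,i})`, so the signal part of
the scaled measurement is an integer, which rounding passes through unchanged; modulo `p`,
`v(c_{ℓ,i})` is `c_{ℓ,i}` again. -/

open Finset

theorem ZMod.intCast_round_sum_val_mul_add {ι : Type*} [Fintype ι] {p : ℕ} [NeZero p]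
    (a : ι → ZMod p) (x : ι → ℤ) (r : ℝ) :
    ((round (∑ ℓ, ((a ℓ).val : ℝ) * x ℓ + r) : ℤ) : ZMod p) =
      ∑ ℓ, (x ℓ : ZMod p) * a ℓ + ((round r : ℤ) : ZMod p) := by
  have hsum : ∑ ℓ, ((a ℓ).val : ℝ) * x ℓ = ((∑ ℓ, ((a ℓ).val : ℤ) * x ℓ : ℤ) : ℝ) := by
    push_cast; rfl
  rw [hsum, round_intCast_add, Int.cast_add]
  push_cast
  simp only [ZMod.natCast_val, ZMod.cast_id', id, mul_comm]

theorem quantized_measurement_finite_field_general (p m n : ℕ) (hp : p.Prime)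
    (τ : ℝ) (hτ : 0 < τ)
    (c : Fin n → Fin m → ZMod p) (t : Fin n → Fin m → ℝ)
    (ht : ∀ ℓ i, t ℓ i = (τ / p) * (((c ℓ i).val : ℕ) : ℝ))
    (x : Fin n → ℤ) (ν : Fin m → ℝ) (i : Fin m) :
    ((round ((p / τ) * (∑ ℓ, t ℓ i * (x ℓ : ℝ) + ν i)) : ℤ) : ZMod p) =
      ∑ ℓ, (x ℓ : ZMod p) * c ℓ i + ((round ((p / τ) * ν i) : ℤ) : ZMod p) := by
  have : NeZero p := ⟨hp.ne_zero⟩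
  have hp0 : (p : ℝ) ≠ 0 := Nat.cast_ne_zero.mpr hp.ne_zero
  have hdescale : (p / τ) * (∑ ℓ, t ℓ i * x ℓ + ν i) =
      ∑ ℓ, ((c ℓ i).val : ℝ) * x ℓ + (p / τ) * ν i := by
    simp only [ht, mul_add, mul_sum]
    congr 1
    refine sum_congr rfl fun ℓ _ => ?_
    field_simp
  rw [hdescale, ZMod.intCast_round_sum_val_mul_add]

/-- The quantized noisy measurement equals a finite-field codeword
combination plus discrete noise: for each coordinate `i`, the image in `ZMod p`
of the integer `round((p/τ)·(Σ_ℓ t_{ℓ,i}·x_ℓ + ν_i))` equals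
`Σ_ℓ (x_ℓ : ZMod p)·c_{ℓ,i} + (round((p/τ)·ν_i) : ZMod p)`,
where `t_{ℓ,i} = (τ/p)·v(c_{ℓ,i})`. -/
theorem quantized_measurement_finite_field (p m n : ℕ) (hp : p.Prime)
    (hm : 0 < m) (hn : 0 < n) (τ : ℝ) (hτ : 0 < τ)
    (c : Fin n → Fin m → ZMod p) (t : Fin n → Fin m → ℝ)
    (ht : ∀ ℓ i, t ℓ i = (τ / p) * (((c ℓ i).val : ℕ) : ℝ))
    (x : Fin n → ℤ) (ν : Fin m → ℝ) (i : Fin m) :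
    ((round ((p / τ) * (∑ ℓ, t ℓ i * (x ℓ : ℝ) + ν i)) : ℤ) : ZMod p) =
      ∑ ℓ, (x ℓ : ZMod p) * c ℓ i + ((round ((p / τ) * ν i) : ℤ) : ZMod p) :=
  quantized_measurement_finite_field_general p m n hp τ hτ c t ht x ν i
end

section
/- The p-level quantized measurement determines the finite-field measurement exactly: for each coordinate i, with y_i = S_p( Σ_{ℓ=1}^{n} t_{ℓ,i}·x_ℓ + ν_i ), the quantity (p/τ)·y_i is an integer, and its image in ZMod p equals Σ_{ℓ=1}^{n} (x_ℓ : ZMod p)·c_{ℓ,i} + z_i, where z_i = (round((p/τ)·ν_i) : ZMod p). -/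
/-- The `p`-level sawtooth quantizer
`S_p(r) = (τ/p)·round(p·r/τ) − τ·⌊round(p·r/τ)/p⌋`: quantize `r` to the nearest
point of `(τ/p)ℤ` and reduce modulo `τℤ` into `[0, τ)`. -/
noncomputable def sawtooth (p : ℕ) (τ : ℝ) (r : ℝ) : ℝ :=
  (τ / p) * ((round (p * r / τ) : ℤ) : ℝ) -
    τ * ((⌊((round (p * r / τ) : ℤ) : ℝ) / (p : ℝ)⌋ : ℤ) : ℝ)

/-!
Scaled by `p/τ`, the argument of the quantizer is the integer `Σ_ℓ v(c_{ℓ,i}) x_ℓ` plus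
`(p/τ) ν_i`, so rounding it gives that integer plus `round((p/τ) ν_i)`; the sawtooth then
reduces this integer modulo `p`, which is invisible in `ZMod p`.
-/

open Finset

theorem div_mul_sawtooth_eq_round_emod {p : ℕ} {τ : ℝ} (hp : p ≠ 0) (hτ : τ ≠ 0) (r : ℝ) :
    (p / τ) * sawtooth p τ r = ((round (p * r / τ) % p : ℤ) : ℝ) := by
  have hp' : (p : ℝ) ≠ 0 := Nat.cast_ne_zero.mpr hp
  rw [sawtooth, Int.floor_div_natCast, Int.floor_intCast, Int.emod_def]
  push_cast
  field_simp

theorem round_mul_div_lattice_sum_add {ι : Type*} [Fintype ι] {p : ℕ} {τ : ℝ} (hp : p ≠ 0)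
    (hτ : τ ≠ 0) (k x : ι → ℤ) (ν : ℝ) :
    round (p * (∑ ℓ, (τ / p) * k ℓ * x ℓ + ν) / τ) =
      ∑ ℓ, k ℓ * x ℓ + round ((p / τ) * ν) := by
  have hp' : (p : ℝ) ≠ 0 := Nat.cast_ne_zero.mpr hp
  have hscaled : p * (∑ ℓ, (τ / p) * k ℓ * x ℓ + ν) / τ =
      ((∑ ℓ, k ℓ * x ℓ : ℤ) : ℝ) + (p / τ) * ν := by
    push_cast
    rw [mul_add, add_div, mul_sum, sum_div]
    congr 1
    · refine sum_congr rfl fun ℓ _ => ?_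
      field_simp
    · ring
  rw [hscaled, round_intCast_add]

theorem sawtooth_measurement_determines_finite_field_general (p m n : ℕ) (hp : p.Prime)
    (τ : ℝ) (hτ : 0 < τ)
    (c : Fin n → Fin m → ZMod p) (t : Fin n → Fin m → ℝ)
    (ht : ∀ ℓ i, t ℓ i = (τ / p) * (((c ℓ i).val : ℕ) : ℝ))
    (x : Fin n → ℤ) (ν : Fin m → ℝ)
    (y : Fin m → ℝ) (hy : ∀ i, y i = sawtooth p τ (∑ ℓ, t ℓ i * (x ℓ : ℝ) + ν i))
    (z : Fin m → ZMod p) (hz : ∀ i, z i = ((round ((p / τ) * ν i) : ℤ) : ZMod p))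
    (i : Fin m) :
    ∃ q : ℤ, (p / τ) * y i = (q : ℝ) ∧
      (q : ZMod p) = ∑ ℓ, (x ℓ : ZMod p) * c ℓ i + z i := by
  have : NeZero p := ⟨hp.ne_zero⟩
  have hround : round (p * (∑ ℓ, t ℓ i * (x ℓ : ℝ) + ν i) / τ) =
      ∑ ℓ, ((c ℓ i).val : ℤ) * x ℓ + round ((p / τ) * ν i) := by
    simpa only [ht, Int.cast_natCast] using
      round_mul_div_lattice_sum_add hp.ne_zero hτ.ne' (fun ℓ => ((c ℓ i).val : ℤ)) x (ν i)
  refine ⟨round (p * (∑ ℓ, t ℓ i * (x ℓ : ℝ) + ν i) / τ) % p, ?_, ?_⟩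
  · rw [hy, div_mul_sawtooth_eq_round_emod hp.ne_zero hτ.ne']
  · rw [ZMod.intCast_mod, hround, hz]
    push_cast
    simp only [ZMod.natCast_val, ZMod.cast_id', id, mul_comm]

/-- The `p`-level quantized measurement determines the
finite-field measurement exactly: for each coordinate `i`, with
`y_i = S_p(Σ_ℓ t_{ℓ,i}·x_ℓ + ν_i)`, the quantity `(p/τ)·y_i` is an integer
whose image in `ZMod p` equals `Σ_ℓ (x_ℓ : ZMod p)·c_{ℓ,i} + z_i`, where
`z_i = (round((p/τ)·ν_i) : ZMod p)` and `t_{ℓ,i} = (τ/p)·v(c_{ℓ,i})`. -/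
theorem sawtooth_measurement_determines_finite_field (p m n : ℕ) (hp : p.Prime)
    (hm : 0 < m) (hn : 0 < n) (τ : ℝ) (hτ : 0 < τ)
    (c : Fin n → Fin m → ZMod p) (t : Fin n → Fin m → ℝ)
    (ht : ∀ ℓ i, t ℓ i = (τ / p) * (((c ℓ i).val : ℕ) : ℝ))
    (x : Fin n → ℤ) (ν : Fin m → ℝ)
    (y : Fin m → ℝ) (hy : ∀ i, y i = sawtooth p τ (∑ ℓ, t ℓ i * (x ℓ : ℝ) + ν i))
    (z : Fin m → ZMod p) (hz : ∀ i, z i = ((round ((p / τ) * ν i) : ℤ) : ZMod p))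
    (i : Fin m) :
    ∃ q : ℤ, (p / τ) * y i = (q : ℝ) ∧
      (q : ZMod p) = ∑ ℓ, (x ℓ : ZMod p) * c ℓ i + z i :=
  sawtooth_measurement_determines_finite_field_general p m n hp τ hτ c t ht x ν y hy z hz i
end

section
/- Any nonzero vector in the kernel of an r-row Vandermonde parity-check matrix with distinct nodes has Hamming weight at least r + 1: if α : Fin n → F is injective, x : Fin n → F is not identically zero, and Σ_{j} x_j · α(j)^i = 0 for every i ∈ Fin r, then the support {j : x_j ≠ 0} has cardinality at least r + 1. -/
/-! If the support `S` of `x` had at most `r` elements, the first `#S` equations, restricted to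
`S`, would form a square Vandermonde system with distinct nodes, hence an invertible one, forcing
`x = 0` on `S`. -/

theorem Finset.eq_zero_of_forall_sum_mul_pow_eq_zero {R ι : Type*} [CommRing R] [IsDomain R]
    {s : Finset ι} {α x : ι → R} (hα : Set.InjOn α s)
    (hx : ∀ i < s.card, ∑ j ∈ s, x j * α j ^ i = 0) : ∀ j ∈ s, x j = 0 := by
  let e := s.equivFin
  have hαe : Function.Injective fun k => α (e.symm k) := fun k l hkl =>
    e.symm.injective (Subtype.ext (hα (e.symm k).2 (e.symm l).2 hkl))
  have hxe : (fun k => x (e.symm k)) = 0 :=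
    Matrix.eq_zero_of_forall_pow_sum_mul_pow_eq_zero hαe fun i => by
      rw [← hx i i.2, ← s.sum_coe_sort, ← e.symm.sum_comp]
  intro j hj
  simpa [e] using congr_fun hxe (e ⟨j, hj⟩)

theorem vandermonde_kernel_min_weight_general {F : Type*} [Field F] [DecidableEq F]
    (n r : ℕ)
    (α : Fin n → F) (hα : Function.Injective α)
    (x : Fin n → F) (hx : x ≠ 0)
    (hker : ∀ i : Fin r, ∑ j, x j * α j ^ (i : ℕ) = 0) :
    r + 1 ≤ (Finset.univ.filter fun j : Fin n => x j ≠ 0).card := by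
  set S := Finset.univ.filter fun j : Fin n => x j ≠ 0
  by_contra! hS
  have hsum : ∀ i < S.card, ∑ j ∈ S, x j * α j ^ i = 0 := fun i hi => by
    rw [Finset.sum_filter_of_ne fun j _ hj => left_ne_zero_of_mul hj]
    exact hker ⟨i, by omega⟩
  have hzero := S.eq_zero_of_forall_sum_mul_pow_eq_zero hα.injOn hsum
  exact hx (funext fun j => by_contra fun hj => hj (hzero j (by simpa [S] using hj)))

/-- Any nonzero vector in the kernel of an `r`-row Vandermonde
parity-check matrix with distinct nodes has Hamming weight at least `r + 1`:
if `α : Fin n → F` is injective, `x` is not identically zero, and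
`Σ_j x_j·α(j)^i = 0` for every `i ∈ Fin r`, then the support of `x` has
cardinality at least `r + 1`. -/
theorem vandermonde_kernel_min_weight {F : Type*} [Field F] [DecidableEq F]
    (n r : ℕ) (hr : 0 < r) (hrn : r < n)
    (α : Fin n → F) (hα : Function.Injective α)
    (x : Fin n → F) (hx : x ≠ 0)
    (hker : ∀ i : Fin r, ∑ j, x j * α j ^ (i : ℕ) = 0) :
    r + 1 ≤ (Finset.univ.filter fun j : Fin n => x j ≠ 0).card :=
  vandermonde_kernel_min_weight_general n r α hα x hx hker
end

section
/- Sparse recovery over the prime subfield via a Reed–Solomon parity check over the extension field: let F be a field that is an algebra over ZMod p with injective algebra map, let α : Fin n → F be injective, let H̃_{i,j} = α(j)^i for i ∈ Fin r, and suppose 2k ≤ r. If x, x' : Fin n → ZMod p each have at most k nonzero entries and H̃·(algebraMap p F ∘ x) = H̃·(algebraMap p F ∘ x'), then x = x'. (This justifies recovering a p-ary sparse vector from syndromes computed over 𝔽_{p^s}.) -/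
/-!
The difference `y` of the two lifted vectors has at most `2k ≤ r` nonzero entries and lies in
the kernel of `H̃`. Restricted to the support of `y`, the first `#supp y` rows of `H̃` form a
square Vandermonde matrix in distinct nodes, which is invertible, so `y = 0`; injectivity of
`ZMod p → F` then gives `x = x'`.
-/

open Finset

section Vandermonde

variable {ι R : Type*} [CommRing R] [IsDomain R]

theorem Finset.eq_zero_of_forall_sum_pow_mul_eq_zero {S : Finset ι} {f v : ι → R}
    (hf : Set.InjOn f S) (hfv : ∀ i < #S, ∑ j ∈ S, f j ^ i * v j = 0) :
    ∀ j ∈ S, v j = 0 := by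
  let e : Fin #S ≃ S := S.equivFin.symm
  have hzero : (fun a => v (e a)) = 0 := by
    refine Matrix.eq_zero_of_forall_pow_sum_mul_pow_eq_zero (f := fun a => f (e a))
      (fun a b hab => e.injective (Subtype.ext (hf (e a).2 (e b).2 hab))) fun i => ?_
    rw [← hfv i i.2, ← sum_coe_sort S, ← e.sum_comp]
    simp only [mul_comm]
  intro j hj
  simpa using congrFun hzero (e.symm ⟨j, hj⟩)

variable [Fintype ι] [DecidableEq R]

theorem eq_zero_of_forall_sum_pow_mul_eq_zero_of_card_support_le {f v : ι → R} {r : ℕ}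
    (hf : Function.Injective f) (hv : #{j | v j ≠ 0} ≤ r)
    (hfv : ∀ i < r, ∑ j, f j ^ i * v j = 0) : v = 0 := by
  have hsupp : ∀ i, ∑ j with v j ≠ 0, f j ^ i * v j = ∑ j, f j ^ i * v j := fun i =>
    sum_filter_of_ne fun j _ hj => right_ne_zero_of_mul hj
  have hzero := Finset.eq_zero_of_forall_sum_pow_mul_eq_zero hf.injOn fun i hi =>
    (hsupp i).trans (hfv i (hi.trans_le hv))
  funext j
  by_contra hj
  exact hj (hzero j (by simpa using hj))

end Vandermonde

theorem card_filter_sub_ne_zero_le {ι G : Type*} [Fintype ι] [AddGroup G] [DecidableEq G]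
    (u v : ι → G) : #{j | u j - v j ≠ 0} ≤ #{j | u j ≠ 0} + #{j | v j ≠ 0} := by
  classical
  refine (card_le_card fun j => ?_).trans (card_union_le _ _)
  simp only [mem_filter, mem_univ, true_and, mem_union]
  contrapose!
  rintro ⟨hu, hv⟩
  simp [hu, hv]

theorem eq_of_mulVec_eq_of_card_support_le {ι R : Type*} [Fintype ι] [CommRing R] [IsDomain R]
    [DecidableEq R] {r k : ℕ} {α : ι → R} (hα : Function.Injective α)
    {H : Matrix (Fin r) ι R} (hH : ∀ i j, H i j = α j ^ (i : ℕ)) (hkr : 2 * k ≤ r)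
    {u v : ι → R} (hu : #{j | u j ≠ 0} ≤ k) (hv : #{j | v j ≠ 0} ≤ k)
    (huv : H.mulVec u = H.mulVec v) : u = v := by
  refine sub_eq_zero.mp
    (eq_zero_of_forall_sum_pow_mul_eq_zero_of_card_support_le (r := r) hα ?_ ?_)
  · calc #{j | (u - v) j ≠ 0} ≤ #{j | u j ≠ 0} + #{j | v j ≠ 0} :=
          card_filter_sub_ne_zero_le u v
      _ ≤ r := by omega
  · intro i hi
    have := congrFun huv ⟨i, hi⟩
    simpa [Matrix.mulVec, dotProduct, hH, mul_sub, sub_eq_zero] using this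

theorem sparse_recovery_over_prime_subfield_general (p : ℕ)
    {F : Type*} [Field F] [Algebra (ZMod p) F]
    (hinj : Function.Injective (algebraMap (ZMod p) F))
    (n r k : ℕ)
    (α : Fin n → F) (hα : Function.Injective α)
    (Ht : Matrix (Fin r) (Fin n) F) (hHt : ∀ i j, Ht i j = α j ^ (i : ℕ))
    (hkr : 2 * k ≤ r)
    (x x' : Fin n → ZMod p)
    (hx : (Finset.univ.filter fun j : Fin n => x j ≠ 0).card ≤ k)
    (hx' : (Finset.univ.filter fun j : Fin n => x' j ≠ 0).card ≤ k)
    (h : Ht.mulVec (fun j => algebraMap (ZMod p) F (x j)) =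
      Ht.mulVec (fun j => algebraMap (ZMod p) F (x' j))) :
    x = x' := by
  classical
  have hsupp (y : Fin n → ZMod p) :
      #{j | algebraMap (ZMod p) F (y j) ≠ 0} = #{j | y j ≠ 0} := by
    simp only [map_ne_zero_iff _ hinj]
  have hlift := eq_of_mulVec_eq_of_card_support_le hα hHt hkr
    ((hsupp x).trans_le hx) ((hsupp x').trans_le hx') h
  exact funext fun j => hinj (congrFun hlift j)

/-- Sparse recovery over the prime subfield via a Reed–Solomon
parity check over the extension field: if `F` is a `ZMod p`-algebra with
injective algebra map, `α : Fin n → F` is injective, `H̃_{i,j} = α(j)^i` for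
`i ∈ Fin r`, and `2k ≤ r`, then `k`-sparse vectors over `ZMod p` are uniquely
determined by their syndromes computed over `F`. -/
theorem sparse_recovery_over_prime_subfield (p : ℕ) (hp : p.Prime)
    {F : Type*} [Field F] [Algebra (ZMod p) F]
    (hinj : Function.Injective (algebraMap (ZMod p) F))
    (n r k : ℕ) (hr : 0 < r) (hrn : r < n) (hk : 0 < k)
    (α : Fin n → F) (hα : Function.Injective α)
    (Ht : Matrix (Fin r) (Fin n) F) (hHt : ∀ i j, Ht i j = α j ^ (i : ℕ))
    (hkr : 2 * k ≤ r)
    (x x' : Fin n → ZMod p)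
    (hx : (Finset.univ.filter fun j : Fin n => x j ≠ 0).card ≤ k)
    (hx' : (Finset.univ.filter fun j : Fin n => x' j ≠ 0).card ≤ k)
    (h : Ht.mulVec (fun j => algebraMap (ZMod p) F (x j)) =
      Ht.mulVec (fun j => algebraMap (ZMod p) F (x' j))) :
    x = x' :=
  sparse_recovery_over_prime_subfield_general p hinj n r k α hα Ht hHt hkr x x' hx hx' h
end
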